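/- Let s, t ≥ 4 both be even, and let W be a resolving set of C_s □ C_t with u ∈ W. If u' is the vertex diametral to u in C_s □ C_t (i.e., obtained from u by shifting the first coordinate by s/2 in C_s and the second coordinate by t/2 in C_t, so d(u,u') equals the diameter of C_s □ C_t), then (W − {u}) ∪ {u'} is also a resolving set of C_s □ C_t. -/

import Mathlib

/-!
Distances in `C_s □ C_t` add up coordinatewise, and on an even cycle every vertex lies on a
geodesic between any vertex and its antipode, so `d(v, u) + d(v, u') = s/2 + t/2` for every
vertex `v`. Hence `u'` distinguishes two vertices exactly when `u` does.
-/

open SimpleGraph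

/-- `W` is a resolving set of `G`: every pair of distinct vertices is
distinguished by its distance to some vertex of `W`. -/
def IsResolving {V : Type*} (G : SimpleGraph V) (W : Set V) : Prop :=
  ∀ x y : V, x ≠ y → ∃ z ∈ W, G.dist x z ≠ G.dist y z

lemma Fin.val_sub_eq_ite {n : ℕ} (a b : Fin n) :
    (a - b).val = if b.val ≤ a.val then a.val - b.val else n + a.val - b.val := by
  split_ifs with h
  · exact Fin.coe_sub_iff_le.mpr h
  · exact Fin.coe_sub_iff_lt.mpr (by omega)

namespace SimpleGraph

variable {V α β : Type*} {G : SimpleGraph V} {u v : V}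

lemma Walk.le_add_length_of_adj_le_succ {f : V → ℕ} (hf : ∀ x y, G.Adj x y → f y ≤ f x + 1)
    (p : G.Walk u v) : f v ≤ f u + p.length := by
  induction p with
  | nil => simp
  | cons hadj _ ih =>
    rw [Walk.length_cons]
    have := hf _ _ hadj
    omega

lemma Reachable.le_add_dist_of_adj_le_succ {f : V → ℕ} (hf : ∀ x y, G.Adj x y → f y ≤ f x + 1)
    (h : G.Reachable u v) : f v ≤ f u + G.dist u v := by
  obtain ⟨p, hp⟩ := h.exists_walk_length_eq_dist
  exact hp ▸ p.le_add_length_of_adj_le_succ hf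

lemma dist_boxProd {G : SimpleGraph α} {H : SimpleGraph β} (hG : G.Preconnected)
    (hH : H.Preconnected) (x y : α × β) :
    (G □ H).dist x y = G.dist x.1 y.1 + H.dist x.2 y.2 := by
  have h := (hG.boxProd hH x y).coe_dist_eq_edist
  rw [edist_boxProd, ← (hG _ _).coe_dist_eq_edist, ← (hH _ _).coe_dist_eq_edist] at h
  exact_mod_cast h

lemma cycleGraph_dist_add_one_le {n : ℕ} [NeZero n] (a : Fin n) :
    (cycleGraph n).dist a (a + 1) ≤ 1 := by
  rcases Nat.lt_or_ge n 2 with hn | hn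
  · have : Subsingleton (Fin n) := Fin.subsingleton_iff_le_one.mpr (by omega)
    simp [Subsingleton.elim (a + 1) a]
  · refine (dist_eq_one_iff_adj.mpr ?_).le
    rw [cycleGraph_adj', add_sub_cancel_left, Fin.val_one', Nat.mod_eq_of_lt hn]
    exact Or.inr rfl

open Fin.NatCast in
lemma cycleGraph_dist_add_natCast_le {n : ℕ} [NeZero n] (a : Fin n) (k : ℕ) :
    (cycleGraph n).dist a (a + k) ≤ k := by
  induction k with
  | zero => rw [Nat.cast_zero, add_zero, dist_self]
  | succ k ih =>
    calc (cycleGraph n).dist a (a + (k + 1 : ℕ))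
        ≤ (cycleGraph n).dist a (a + k) + (cycleGraph n).dist (a + k) (a + k + 1) := by
          rw [Nat.cast_succ, ← add_assoc]
          exact (cycleGraph_preconnected _ _).dist_triangle_left _
      _ ≤ k + 1 := add_le_add ih (cycleGraph_dist_add_one_le _)

lemma cycleGraph_dist {n : ℕ} (a b : Fin n) :
    (cycleGraph n).dist a b = min (b - a).val (a - b).val := by
  rcases n with _ | n
  · exact a.elim0
  refine le_antisymm (le_min ?_ ?_) ?_
  · simpa using cycleGraph_dist_add_natCast_le a (b - a).val
  · simpa [dist_comm] using cycleGraph_dist_add_natCast_le b (a - b).val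
  · have hlip : ∀ x y : Fin (n + 1), (cycleGraph (n + 1)).Adj x y →
        min (y - a).val (a - y).val ≤ min (x - a).val (a - x).val + 1 := by
      intro x y hxy
      rw [cycleGraph_adj'] at hxy
      simp only [Fin.val_sub_eq_ite] at hxy ⊢
      split_ifs at hxy ⊢ <;> omega
    simpa using (cycleGraph_preconnected a b).le_add_dist_of_adj_le_succ hlip

lemma cycleGraph_dist_add_half_add_dist {n : ℕ} (hn : Even n) (h : n / 2 < n) (a b : Fin n) :
    (cycleGraph n).dist a (b + ⟨n / 2, h⟩) + (cycleGraph n).dist a b = n / 2 := by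
  obtain ⟨m, rfl⟩ := hn
  simp only [cycleGraph_dist, Fin.val_sub_eq_ite, Fin.val_add_eq_ite]
  have := a.isLt
  have := b.isLt
  split_ifs <;> omega

end SimpleGraph

lemma IsResolving.diff_union_of_dist_add_dist_eq {V : Type*} {G : SimpleGraph V} {W : Set V}
    (hW : IsResolving G W) {u u' : V} {c : ℕ} (h : ∀ v, G.dist v u' + G.dist v u = c) :
    IsResolving G ((W \ {u}) ∪ {u'}) := by
  intro x y hxy
  obtain ⟨z, hz, hdz⟩ := hW x y hxy
  by_cases hzu : z = u
  · subst hzu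
    refine ⟨u', Or.inr rfl, fun hdz' => hdz ?_⟩
    have := h x
    have := h y
    omega
  · exact ⟨z, Or.inl ⟨hz, hzu⟩, hdz⟩

/-- For even `s, t ≥ 4`: if `W` is a resolving set of `C_s □ C_t` containing `u`, and
`u'` is the vertex diametral to `u` (obtained by shifting the first coordinate by
`s/2` and the second by `t/2`), then `(W \ {u}) ∪ {u'}` is also a resolving set. -/
theorem torus_swap_antipodal (s t : ℕ) (hs : 4 ≤ s) (ht : 4 ≤ t)
    (hes : Even s) (het : Even t)
    (W : Set (Fin s × Fin t))
    (hW : IsResolving (cycleGraph s □ cycleGraph t) W)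
    (u : Fin s × Fin t) :
    IsResolving (cycleGraph s □ cycleGraph t)
      ((W \ {u}) ∪ {(u.1 + ⟨s / 2, by omega⟩, u.2 + ⟨t / 2, by omega⟩)}) := by
  refine hW.diff_union_of_dist_add_dist_eq (c := s / 2 + t / 2) fun v => ?_
  rw [dist_boxProd cycleGraph_preconnected cycleGraph_preconnected,
    dist_boxProd cycleGraph_preconnected cycleGraph_preconnected]
  have hs' := cycleGraph_dist_add_half_add_dist hes (by omega) v.1 u.1
  have ht' := cycleGraph_dist_add_half_add_dist het (by omega) v.2 u.2
  dsimp only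
  omega
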